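/- arXiv:2603.24064 — 2 statements merged into one kernel-verified Lean document; each statement's English description precedes it below -/
import Mathlib

section
/- Utility-invariant threshold identity (Theorem, ratio form): under the hypotheses of the product-form identity (portfolio supported on A, cash stationarity λ = ∑_x Pr(x)·D(W(x)), and active stationarity p ℓ i · E₋ℓ[D(g ℓ i + R_ℓ)] = λ · π ℓ i for all i ∈ A ℓ), if in addition the continuation factor K_ℓ = E₋ℓ[D ∘ R_ℓ] is strictly positive and Q_{ℓ,A} ≠ 1, then λ / K_ℓ = (1 − P_{ℓ,A}) / (1 − Q_{ℓ,A}). -/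
open Finset

/-- Probability of a product state `x`. -/
def prodProb {m : ℕ} {n : Fin m → ℕ} (p : ∀ ℓ, Fin (n ℓ) → ℝ)
    (x : ∀ ℓ, Fin (n ℓ)) : ℝ :=
  ∏ ℓ, p ℓ (x ℓ)

/-- Terminal wealth of the portfolio `(c, g)` in product state `x`. -/
def wealth {m : ℕ} {n : Fin m → ℕ} (c : ℝ) (g : ∀ ℓ, Fin (n ℓ) → ℝ)
    (x : ∀ ℓ, Fin (n ℓ)) : ℝ :=
  c + ∑ ℓ, g ℓ (x ℓ)

/-- Probability of a reduced state `y` (a state of all events other than `ℓ`). -/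
def redProb {m : ℕ} {n : Fin m → ℕ} (p : ∀ ℓ, Fin (n ℓ) → ℝ) (ℓ : Fin m)
    (y : ∀ r : {r : Fin m // r ≠ ℓ}, Fin (n r.1)) : ℝ :=
  ∏ r, p r.1 (y r)

/-- Background wealth `R_ℓ(y)` from all events other than `ℓ`. -/
def background {m : ℕ} {n : Fin m → ℕ} (c : ℝ) (g : ∀ ℓ, Fin (n ℓ) → ℝ) (ℓ : Fin m)
    (y : ∀ r : {r : Fin m // r ≠ ℓ}, Fin (n r.1)) : ℝ :=
  c + ∑ r, g r.1 (y r)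

/-- Reduced expectation `E₋ℓ[h]` over reduced states of event `ℓ`. -/
def Eminus {m : ℕ} {n : Fin m → ℕ} (p : ∀ ℓ, Fin (n ℓ) → ℝ) (ℓ : Fin m)
    (h : (∀ r : {r : Fin m // r ≠ ℓ}, Fin (n r.1)) → ℝ) : ℝ :=
  ∑ y, redProb p ℓ y * h y

/-- Feasibility: nonnegative cash and wagers, unit budget, positive wealth in every state. -/
def Feasible {m : ℕ} {n : Fin m → ℕ} (π : ∀ ℓ, Fin (n ℓ) → ℝ)
    (c : ℝ) (g : ∀ ℓ, Fin (n ℓ) → ℝ) : Prop :=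
  0 ≤ c ∧ (∀ ℓ i, 0 ≤ g ℓ i) ∧ (c + ∑ ℓ, ∑ i, π ℓ i * g ℓ i = 1) ∧
    ∀ x, 0 < wealth c g x

/-- The wagers `g` are supported on the support family `A`. -/
def SupportedOn {m : ℕ} {n : Fin m → ℕ} (A : ∀ ℓ, Finset (Fin (n ℓ)))
    (g : ∀ ℓ, Fin (n ℓ) → ℝ) : Prop :=
  ∀ ℓ i, (i ∈ A ℓ → 0 < g ℓ i) ∧ (i ∉ A ℓ → g ℓ i = 0)

/-- `U` is an admissible utility with derivative `U'`. -/
def Admissible (U U' : ℝ → ℝ) : Prop :=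
  (∀ w : ℝ, 0 < w → HasDerivAt U (U' w) w) ∧ (∀ w : ℝ, 0 < w → 0 < U' w) ∧
    StrictAntiOn U' (Set.Ioi 0)


lemma decomp {m : ℕ} {n : Fin m → ℕ} (p : ∀ ℓ, Fin (n ℓ) → ℝ) (c : ℝ)
    (g : ∀ ℓ, Fin (n ℓ) → ℝ) (ℓ : Fin m) (D : ℝ → ℝ) :
    ∑ x, prodProb p x * D (wealth c g x)
      = ∑ i, p ℓ i * Eminus p ℓ (fun y => D (g ℓ i + background c g ℓ y)) := by
  classical
  set e := (Equiv.piSplitAt ℓ (fun r => Fin (n r))).symm with he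
  rw [← Equiv.sum_comp e (fun x => prodProb p x * D (wealth c g x)), Fintype.sum_prod_type]
  refine Finset.sum_congr rfl fun i _ => ?_
  rw [Eminus, Finset.mul_sum]
  refine Finset.sum_congr rfl fun y _ => ?_
  have h1 : e (i, y) ℓ = i := by simp [he]
  have h2 : ∀ r : {r : Fin m // r ≠ ℓ}, e (i, y) r.1 = y r := by
    intro r; simp [he, r.2]
  have hprod : prodProb p (e (i, y)) = p ℓ i * redProb p ℓ y := by
    rw [prodProb, Fintype.prod_eq_mul_prod_compl ℓ, h1, redProb]
    congr 1
    rw [Finset.prod_subtype (p := fun r => r ≠ ℓ) ({ℓ}ᶜ : Finset (Fin m)) (fun x => by simp)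
      (fun r => p r (e (i, y) r))]
    exact Finset.prod_congr rfl fun r _ => by rw [h2]
  have hw : wealth c g (e (i, y)) = g ℓ i + background c g ℓ y := by
    rw [wealth, Fintype.sum_eq_add_sum_compl ℓ, h1, background]
    have : ∑ r ∈ ({ℓ}ᶜ : Finset (Fin m)), g r (e (i, y) r)
        = ∑ r : {r : Fin m // r ≠ ℓ}, g r.1 (y r) := by
      rw [Finset.sum_subtype (p := fun r => r ≠ ℓ) ({ℓ}ᶜ : Finset (Fin m)) (fun x => by simp)
        (fun r => g r (e (i, y) r))]
      exact Finset.sum_congr rfl fun r _ => by rw [h2]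
    rw [this]; ring
  rw [hprod, hw]; ring

/-- utility-invariant threshold identity, ratio form:
`λ / K_ℓ = (1 - P_{ℓ,A}) / (1 - Q_{ℓ,A})`. -/
theorem threshold_identity_ratio {m : ℕ} (n : Fin m → ℕ)
    (p π : ∀ ℓ, Fin (n ℓ) → ℝ) (hm : 1 ≤ m)
    (hp : ∀ ℓ i, 0 < p ℓ i) (hpsum : ∀ ℓ, ∑ i, p ℓ i = 1)
    (hπ : ∀ ℓ i, 0 < π ℓ i)
    (A : ∀ r, Finset (Fin (n r))) (ℓ : Fin m) (D : ℝ → ℝ)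
    (c : ℝ) (g : ∀ ℓ, Fin (n ℓ) → ℝ) (lam : ℝ)
    (hsupp : SupportedOn A g)
    (hcash : lam = ∑ x, prodProb p x * D (wealth c g x))
    (hactive : ∀ i ∈ A ℓ,
      p ℓ i * Eminus p ℓ (fun y => D (g ℓ i + background c g ℓ y)) = lam * π ℓ i)
    (hK : 0 < Eminus p ℓ (fun y => D (background c g ℓ y)))
    (hQ : (∑ i ∈ A ℓ, π ℓ i) ≠ 1) :
    lam / Eminus p ℓ (fun y => D (background c g ℓ y))
      = (1 - ∑ i ∈ A ℓ, p ℓ i) / (1 - ∑ i ∈ A ℓ, π ℓ i) := by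
  classical
  set K := Eminus p ℓ (fun y => D (background c g ℓ y)) with hKdef
  have key : lam = lam * (∑ i ∈ A ℓ, π ℓ i) + (1 - ∑ i ∈ A ℓ, p ℓ i) * K := by
    have hsum : ∑ x, prodProb p x * D (wealth c g x)
        = lam * (∑ i ∈ A ℓ, π ℓ i) + (1 - ∑ i ∈ A ℓ, p ℓ i) * K := by
      rw [decomp p c g ℓ D,
        ← Finset.sum_add_sum_compl (A ℓ) (fun i => p ℓ i * Eminus p ℓ
          (fun y => D (g ℓ i + background c g ℓ y)))]
      congr 1
      · rw [Finset.mul_sum]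
        exact Finset.sum_congr rfl fun i hi => hactive i hi
      · have h0 : ∀ i ∈ (A ℓ)ᶜ, p ℓ i * Eminus p ℓ
            (fun y => D (g ℓ i + background c g ℓ y)) = p ℓ i * K := by
          intro i hi
          have := (hsupp ℓ i).2 (Finset.mem_compl.mp hi)
          simp [this, hKdef]
        rw [Finset.sum_congr rfl h0, ← Finset.sum_mul]
        congr 1
        have := Finset.sum_add_sum_compl (A ℓ) (p ℓ)
        rw [hpsum ℓ] at this
        linarith
    conv_lhs => rw [hcash]
    exact hsum
  have hQ1 : 1 - (∑ i ∈ A ℓ, π ℓ i) ≠ 0 := fun h => hQ (by linarith)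
  have hK0 : K ≠ 0 := ne_of_gt hK
  field_simp
  nlinarith [key]
end

section
/- Sandwich characterization and stopping rule at an optimum (Corollary): let U be admissible with derivative U', and let (c, g) be a feasible portfolio with c > 0 that maximizes Φ over all feasible portfolios. Fix an event ℓ and let A ℓ = {i : g ℓ i > 0} be its active set, with P_{ℓ,A} = ∑_{i ∈ A ℓ} p ℓ i and Q_{ℓ,A} = ∑_{i ∈ A ℓ} π ℓ i. If A ℓ is a proper subset of the outcomes of event ℓ, then Q_{ℓ,A} < 1, every active outcome i ∈ A ℓ satisfies p ℓ i / π ℓ i > (1 − P_{ℓ,A}) / (1 − Q_{ℓ,A}), and every inactive outcome j ∉ A ℓ satisfies p ℓ j / π ℓ j ≤ (1 − P_{ℓ,A}) / (1 − Q_{ℓ,A}). -/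
open Finset

/-!
Moving an amount `t` of cash onto outcome `k` of event `ℓ` keeps the portfolio feasible for small
`t ≥ 0`, and for small `|t|` when `g ℓ k > 0`. At the optimum the derivative `p_k M_k - λ π_k` of
`Φ` along this move is therefore `≤ 0`, and `= 0` on the active set, where
`M_k = E₋ℓ[U'(g_k + R_ℓ)]` and `λ = ∑ p_i M_i`. Strict concavity gives `M_i < F := E₋ℓ[U'(R_ℓ)]`
for active `i`, while `M_j = F` for inactive `j`. Summing, `λ = λ Q + (1 - P) F`, so `Q < 1` and
`(1 - P) / (1 - Q) = λ / F`; the KKT relations then become the two inequalities.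
-/

open Filter Topology

theorem HasDerivAt.nonpos_of_isLocalMaxOn_Ici {f : ℝ → ℝ} {f' a : ℝ} (hf : HasDerivAt f f' a)
    (h : IsLocalMaxOn f (Set.Ici a) a) : f' ≤ 0 := by
  have h1 : (1 : ℝ) ∈ posTangentConeAt (Set.Ici a) a :=
    mem_posTangentConeAt_of_segment_subset (by
      rw [segment_eq_Icc (by linarith)]; exact Set.Icc_subset_Ici_self)
  simpa using h.hasFDerivWithinAt_nonpos hf.hasFDerivAt.hasFDerivWithinAt h1

theorem hasDerivAt_sum_mul_comp_add_mul {ι : Type*} [Fintype ι] {U U' : ℝ → ℝ}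
    (w W a : ι → ℝ) (hU : ∀ x, HasDerivAt U (U' (W x)) (W x)) :
    HasDerivAt (fun t => ∑ x, w x * U (W x + t * a x)) (∑ x, w x * (U' (W x) * a x)) 0 := by
  refine HasDerivAt.fun_sum fun x _ => HasDerivAt.const_mul _ ?_
  have hline : HasDerivAt (fun t => W x + t * a x) (a x) 0 := by
    simpa using ((hasDerivAt_id 0).mul_const (a x)).const_add (W x)
  exact (by simpa using hU x : HasDerivAt U (U' (W x)) (W x + 0 * a x)).comp 0 hline

theorem Fintype.sum_piSplitAt {α : Type*} [Fintype α] [DecidableEq α] {β : α → Type*}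
    [∀ a, Fintype (β a)] {M : Type*} [AddCommMonoid M] (i : α)
    (F : β i → (∀ j : {j // j ≠ i}, β j) → M) :
    ∑ x : ∀ a, β a, F (x i) (fun j => x j) = ∑ b, ∑ y, F b y := by
  rw [← Fintype.sum_prod_type']
  exact Fintype.sum_equiv (Equiv.piSplitAt i β) _ _ fun _ => rfl

theorem sandwich_of_kkt {ι : Type*} [Fintype ι] [DecidableEq ι] {p π M : ι → ℝ} {F : ℝ}
    {A : Finset ι} (hp : ∀ i, 0 < p i) (hπ : ∀ i, 0 < π i) (hpsum : ∑ i, p i = 1)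
    (hF : 0 < F)
    (hactive : ∀ i ∈ A, p i * M i = (∑ k, p k * M k) * π i ∧ M i < F)
    (hinactive : ∀ j ∉ A, M j = F ∧ p j * M j ≤ (∑ k, p k * M k) * π j) (hA : A ≠ univ) :
    ∑ i ∈ A, π i < 1
    ∧ (∀ i ∈ A, (1 - ∑ i ∈ A, p i) / (1 - ∑ i ∈ A, π i) < p i / π i)
    ∧ ∀ j ∉ A, p j / π j ≤ (1 - ∑ i ∈ A, p i) / (1 - ∑ i ∈ A, π i) := by
  obtain ⟨j₀, -, hj₀⟩ := exists_of_ssubset (ssubset_univ_iff.mpr hA)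
  set lam := ∑ k, p k * M k with hlam
  have hlam_pos : 0 < lam := by
    obtain ⟨hMj₀, hj₀_le⟩ := hinactive j₀ hj₀
    rw [hMj₀] at hj₀_le
    exact pos_of_mul_pos_left ((mul_pos (hp j₀) hF).trans_le hj₀_le) (hπ j₀).le
  have hcompl_p : ∑ j ∈ Aᶜ, p j = 1 - ∑ i ∈ A, p i := by
    rw [← hpsum, ← sum_add_sum_compl A p]; ring
  have hP : ∑ i ∈ A, p i < 1 := by
    have := single_le_sum (fun j _ => (hp j).le) (mem_compl.mpr hj₀)
    linarith [hp j₀]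
  have hsplit : lam * (1 - ∑ i ∈ A, π i) = (1 - ∑ i ∈ A, p i) * F := by
    have hA_eq : ∑ i ∈ A, p i * M i = lam * ∑ i ∈ A, π i := by
      rw [mul_sum]; exact sum_congr rfl fun i hi => (hactive i hi).1
    have hAc_eq : ∑ j ∈ Aᶜ, p j * M j = (1 - ∑ i ∈ A, p i) * F := by
      rw [← hcompl_p, sum_mul]
      exact sum_congr rfl fun j hj => by rw [(hinactive j (mem_compl.mp hj)).1]
    have := sum_add_sum_compl A fun i => p i * M i
    rw [hA_eq, hAc_eq, ← hlam] at this
    linarith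
  have hQ : ∑ i ∈ A, π i < 1 := by
    by_contra! hQ
    nlinarith [mul_pos (sub_pos.mpr hP) hF]
  have hratio : (1 - ∑ i ∈ A, p i) / (1 - ∑ i ∈ A, π i) = lam / F := by
    rw [div_eq_div_iff (sub_pos.mpr hQ).ne' hF.ne']; linarith
  refine ⟨hQ, fun i hi => ?_, fun j hj => ?_⟩
  · obtain ⟨hKKT, hMi⟩ := hactive i hi
    rw [hratio, div_lt_div_iff₀ hF (hπ i)]
    nlinarith [hp i]
  · obtain ⟨hMj, hKKT⟩ := hinactive j hj
    rw [hratio, div_le_div_iff₀ (hπ j) hF]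
    rw [hMj] at hKKT
    linarith

section Portfolio

variable {m : ℕ} {n : Fin m → ℕ}

theorem prodProb_eq_mul_redProb (p : ∀ ℓ, Fin (n ℓ) → ℝ) (ℓ : Fin m) (x : ∀ ℓ, Fin (n ℓ)) :
    prodProb p x = p ℓ (x ℓ) * redProb p ℓ (fun r => x r) :=
  Fintype.prod_eq_mul_prod_subtype_ne _ ℓ

theorem wealth_eq_add_background (c : ℝ) (g : ∀ ℓ, Fin (n ℓ) → ℝ) (ℓ : Fin m)
    (x : ∀ ℓ, Fin (n ℓ)) :
    wealth c g x = g ℓ (x ℓ) + background c g ℓ (fun r => x r) := by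
  rw [wealth, background, Fintype.sum_eq_add_sum_subtype_ne _ ℓ]
  ring

theorem sum_prodProb_mul_eq_sum_mul_Eminus (p : ∀ ℓ, Fin (n ℓ) → ℝ) (c : ℝ)
    (g : ∀ ℓ, Fin (n ℓ) → ℝ) (ℓ : Fin m) (f : Fin (n ℓ) → ℝ → ℝ) :
    ∑ x, prodProb p x * f (x ℓ) (wealth c g x)
      = ∑ i, p ℓ i * Eminus p ℓ (fun y => f i (g ℓ i + background c g ℓ y)) := by
  simp_rw [prodProb_eq_mul_redProb p ℓ, wealth_eq_add_background c g ℓ]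
  refine (Fintype.sum_piSplitAt (β := fun ℓ => Fin (n ℓ)) ℓ
    fun i y => p ℓ i * redProb p ℓ y * f i (g ℓ i + background c g ℓ y)).trans ?_
  simp_rw [Eminus, mul_sum, mul_assoc]

def betOn (ℓ : Fin m) (k : Fin (n ℓ)) (t : ℝ) : ∀ ℓ, Fin (n ℓ) → ℝ :=
  Pi.single ℓ (Pi.single k t)

theorem sum_betOn_apply (ℓ : Fin m) (k : Fin (n ℓ)) (t : ℝ) (x : ∀ ℓ, Fin (n ℓ)) :
    ∑ r, betOn ℓ k t r (x r) = t * if x ℓ = k then 1 else 0 := by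
  rw [Fintype.sum_eq_single ℓ fun r hr => by simp [betOn, Pi.single_eq_of_ne hr]]
  simp [betOn, Pi.single_apply]

theorem wealth_shift (c t : ℝ) (π : ∀ ℓ, Fin (n ℓ) → ℝ) (g : ∀ ℓ, Fin (n ℓ) → ℝ) (ℓ : Fin m)
    (k : Fin (n ℓ)) (x : ∀ ℓ, Fin (n ℓ)) :
    wealth (c - t * π ℓ k) (g + betOn ℓ k t) x
      = wealth c g x + t * ((if x ℓ = k then 1 else 0) - π ℓ k) := by
  simp only [wealth, Pi.add_apply, sum_add_distrib, sum_betOn_apply]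
  ring

theorem budget_shift (c t : ℝ) (π : ∀ ℓ, Fin (n ℓ) → ℝ) (g : ∀ ℓ, Fin (n ℓ) → ℝ) (ℓ : Fin m)
    (k : Fin (n ℓ)) :
    c - t * π ℓ k + ∑ r, ∑ i, π r i * (g + betOn ℓ k t) r i
      = c + ∑ r, ∑ i, π r i * g r i := by
  have hsingle : ∑ r, ∑ i, π r i * betOn ℓ k t r i = t * π ℓ k := by
    rw [Fintype.sum_eq_single ℓ fun r hr => by simp [betOn, Pi.single_eq_of_ne hr]]
    simp [betOn, Pi.single_apply, mul_comm]
  simp only [Pi.add_apply, mul_add, sum_add_distrib, hsingle]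
  ring

theorem Feasible.eventually_shift {π : ∀ ℓ, Fin (n ℓ) → ℝ} {c : ℝ} {g : ∀ ℓ, Fin (n ℓ) → ℝ}
    (hfeas : Feasible π c g) (hc : 0 < c) (ℓ : Fin m) (k : Fin (n ℓ)) :
    ∀ᶠ t in 𝓝 0, 0 ≤ g ℓ k + t →
      Feasible π (c - t * π ℓ k) (g + betOn ℓ k t) := by
  obtain ⟨-, hg, hbudget, hW⟩ := hfeas
  have hcash : ∀ᶠ t in 𝓝 (0 : ℝ), 0 < c - t * π ℓ k :=
    ((continuous_const.sub (continuous_id.mul continuous_const)).tendsto' 0 c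
      (by simp)).eventually_const_lt hc
  have hwealth : ∀ᶠ t in 𝓝 (0 : ℝ), ∀ x,
      0 < wealth c g x + t * ((if x ℓ = k then 1 else 0) - π ℓ k) :=
    eventually_all.mpr fun x =>
      ((continuous_const.add (continuous_id.mul continuous_const)).tendsto' 0 (wealth c g x)
        (by simp)).eventually_const_lt (hW x)
  filter_upwards [hcash, hwealth] with t hct hWt hgk
  refine ⟨hct.le, fun r i => ?_, by rw [budget_shift, hbudget],
    fun x => by rw [wealth_shift]; exact hWt x⟩
  rcases eq_or_ne r ℓ with rfl | hr
  · rcases eq_or_ne i k with rfl | hi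
    · simpa [betOn] using hgk
    · simpa [betOn, Pi.single_eq_of_ne hi] using hg r i
  · simpa [betOn, Pi.single_eq_of_ne hr] using hg r i

theorem Eminus_lt_Eminus {p : ∀ ℓ, Fin (n ℓ) → ℝ} (hp : ∀ ℓ i, 0 < p ℓ i) {ℓ : Fin m}
    [Nonempty (∀ r : {r : Fin m // r ≠ ℓ}, Fin (n r.1))]
    {h₁ h₂ : (∀ r : {r : Fin m // r ≠ ℓ}, Fin (n r.1)) → ℝ} (h : ∀ y, h₁ y < h₂ y) :
    Eminus p ℓ h₁ < Eminus p ℓ h₂ :=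
  sum_lt_sum_of_nonempty univ_nonempty fun y _ =>
    mul_lt_mul_of_pos_left (h y) (prod_pos fun r _ => hp r.1 (y r))

theorem Eminus_pos {p : ∀ ℓ, Fin (n ℓ) → ℝ} (hp : ∀ ℓ i, 0 < p ℓ i) {ℓ : Fin m}
    [Nonempty (∀ r : {r : Fin m // r ≠ ℓ}, Fin (n r.1))]
    {h : (∀ r : {r : Fin m // r ≠ ℓ}, Fin (n r.1)) → ℝ} (hpos : ∀ y, 0 < h y) :
    0 < Eminus p ℓ h := by
  simpa [Eminus] using Eminus_lt_Eminus hp (h₁ := fun _ => 0) hpos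

def condMarginal (p : ∀ ℓ, Fin (n ℓ) → ℝ) (U' : ℝ → ℝ) (c : ℝ) (g : ∀ ℓ, Fin (n ℓ) → ℝ)
    (ℓ : Fin m) (i : Fin (n ℓ)) : ℝ :=
  Eminus p ℓ fun y => U' (g ℓ i + background c g ℓ y)

theorem sum_prodProb_mul_marginal_shift (p π : ∀ ℓ, Fin (n ℓ) → ℝ) (U' : ℝ → ℝ) (c : ℝ)
    (g : ∀ ℓ, Fin (n ℓ) → ℝ) (ℓ : Fin m) (k : Fin (n ℓ)) :
    ∑ x, prodProb p x * (U' (wealth c g x) * ((if x ℓ = k then 1 else 0) - π ℓ k))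
      = p ℓ k * condMarginal p U' c g ℓ k
        - (∑ i, p ℓ i * condMarginal p U' c g ℓ i) * π ℓ k := by
  rw [sum_prodProb_mul_eq_sum_mul_Eminus p c g ℓ
    fun i w => U' w * ((if i = k then 1 else 0) - π ℓ k)]
  simp only [Eminus, ← sum_mul, ← mul_assoc]
  simp only [condMarginal, Eminus, mul_sub, mul_ite, mul_one, mul_zero, sum_sub_distrib,
    sum_ite_eq', mem_univ, if_true, sum_mul]

theorem kkt_of_isOptimal {p π : ∀ ℓ, Fin (n ℓ) → ℝ} {U U' : ℝ → ℝ}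
    (hU : ∀ w, 0 < w → HasDerivAt U (U' w) w) {c : ℝ} {g : ∀ ℓ, Fin (n ℓ) → ℝ}
    (hfeas : Feasible π c g) (hc : 0 < c)
    (hopt : ∀ c' : ℝ, ∀ g' : ∀ ℓ, Fin (n ℓ) → ℝ, Feasible π c' g' →
      ∑ x, prodProb p x * U (wealth c' g' x) ≤ ∑ x, prodProb p x * U (wealth c g x))
    (ℓ : Fin m) (k : Fin (n ℓ)) :
    p ℓ k * condMarginal p U' c g ℓ k ≤ (∑ i, p ℓ i * condMarginal p U' c g ℓ i) * π ℓ k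
    ∧ (0 < g ℓ k → p ℓ k * condMarginal p U' c g ℓ k
        = (∑ i, p ℓ i * condMarginal p U' c g ℓ i) * π ℓ k) := by
  set φ : ℝ → ℝ := fun t =>
    ∑ x, prodProb p x * U (wealth c g x + t * ((if x ℓ = k then 1 else 0) - π ℓ k))
  have hφ : HasDerivAt φ (p ℓ k * condMarginal p U' c g ℓ k
      - (∑ i, p ℓ i * condMarginal p U' c g ℓ i) * π ℓ k) 0 := by
    rw [← sum_prodProb_mul_marginal_shift]
    exact hasDerivAt_sum_mul_comp_add_mul _ _ _ fun x => hU _ (hfeas.2.2.2 x)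
  have hmax : ∀ᶠ t in 𝓝 0, 0 ≤ g ℓ k + t → φ t ≤ φ 0 :=
    (hfeas.eventually_shift hc ℓ k).mono fun t ht hgt => by
      simpa [φ, wealth_shift] using hopt _ _ (ht hgt)
  constructor
  · have hmaxOn : IsLocalMaxOn φ (Set.Ici 0) 0 :=
      (eventually_nhdsWithin_of_forall fun t ht => add_nonneg (hfeas.2.1 ℓ k) ht).mp
        (nhdsWithin_le_nhds hmax)
    linarith [hφ.nonpos_of_isLocalMaxOn_Ici hmaxOn]
  · intro hgk
    have hmax' : IsLocalMax φ 0 :=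
      (eventually_gt_nhds (neg_lt_zero.mpr hgk)).mp <| hmax.mono fun t h ht =>
        h (by linarith)
    linarith [hmax'.hasDerivAt_eq_zero hφ]

end Portfolio

theorem sandwich_characterization_general {m : ℕ} (n : Fin m → ℕ)
    (p π : ∀ ℓ, Fin (n ℓ) → ℝ)
    (hp : ∀ ℓ i, 0 < p ℓ i) (hpsum : ∀ ℓ, ∑ i, p ℓ i = 1)
    (hπ : ∀ ℓ i, 0 < π ℓ i)
    (U U' : ℝ → ℝ) (hU : Admissible U U')
    (c : ℝ) (g : ∀ ℓ, Fin (n ℓ) → ℝ)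
    (hfeas : Feasible π c g) (hc : 0 < c)
    (hopt : ∀ c' : ℝ, ∀ g' : ∀ ℓ, Fin (n ℓ) → ℝ, Feasible π c' g' →
      ∑ x, prodProb p x * U (wealth c' g' x) ≤ ∑ x, prodProb p x * U (wealth c g x))
    (ℓ : Fin m)
    (hproper : Finset.univ.filter (fun i => 0 < g ℓ i) ≠ (Finset.univ : Finset (Fin (n ℓ)))) :
    (∑ i ∈ Finset.univ.filter (fun i => 0 < g ℓ i), π ℓ i) < 1
    ∧ (∀ i ∈ Finset.univ.filter (fun i => 0 < g ℓ i),
        (1 - ∑ i ∈ Finset.univ.filter (fun i => 0 < g ℓ i), p ℓ i)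
            / (1 - ∑ i ∈ Finset.univ.filter (fun i => 0 < g ℓ i), π ℓ i)
          < p ℓ i / π ℓ i)
    ∧ (∀ j : Fin (n ℓ), j ∉ Finset.univ.filter (fun i => 0 < g ℓ i) →
        p ℓ j / π ℓ j
          ≤ (1 - ∑ i ∈ Finset.univ.filter (fun i => 0 < g ℓ i), p ℓ i)
            / (1 - ∑ i ∈ Finset.univ.filter (fun i => 0 < g ℓ i), π ℓ i)) := by
  have hnonempty : ∀ r, Nonempty (Fin (n r)) := fun r => by
    by_contra h
    rw [not_nonempty_iff] at h
    simpa using hpsum r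
  have hR : ∀ y, 0 < background c g ℓ y := fun y =>
    add_pos_of_pos_of_nonneg hc (sum_nonneg fun r _ => hfeas.2.1 r.1 _)
  have hF : 0 < Eminus p ℓ fun y => U' (background c g ℓ y) :=
    Eminus_pos hp fun y => hU.2.1 _ (hR y)
  have hkkt := kkt_of_isOptimal hU.1 hfeas hc hopt ℓ
  refine sandwich_of_kkt (M := condMarginal p U' c g ℓ) (hp ℓ) (hπ ℓ) (hpsum ℓ) hF
    (fun i hi => ?_) (fun j hj => ?_) hproper
  · have hgi : 0 < g ℓ i := (mem_filter.mp hi).2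
    exact ⟨(hkkt i).2 hgi, Eminus_lt_Eminus hp fun y =>
      hU.2.2 (hR y) (add_pos hgi (hR y)) (lt_add_of_pos_left _ hgi)⟩
  · have hgj : g ℓ j = 0 := le_antisymm (by simpa using hj) (hfeas.2.1 ℓ j)
    exact ⟨by simp [condMarginal, hgj], (hkkt j).1⟩

/-- sandwich characterization and stopping rule at an optimum: if the
active set `A ℓ = {i : g ℓ i > 0}` of event `ℓ` is proper, then `Q_{ℓ,A} < 1`, every
active edge ratio strictly exceeds `(1-P)/(1-Q)`, and every inactive one is `≤` it. -/
theorem sandwich_characterization {m : ℕ} (n : Fin m → ℕ)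
    (p π : ∀ ℓ, Fin (n ℓ) → ℝ) (hm : 1 ≤ m)
    (hp : ∀ ℓ i, 0 < p ℓ i) (hpsum : ∀ ℓ, ∑ i, p ℓ i = 1)
    (hπ : ∀ ℓ i, 0 < π ℓ i)
    (U U' : ℝ → ℝ) (hU : Admissible U U')
    (c : ℝ) (g : ∀ ℓ, Fin (n ℓ) → ℝ)
    (hfeas : Feasible π c g) (hc : 0 < c)
    (hopt : ∀ c' : ℝ, ∀ g' : ∀ ℓ, Fin (n ℓ) → ℝ, Feasible π c' g' →
      ∑ x, prodProb p x * U (wealth c' g' x) ≤ ∑ x, prodProb p x * U (wealth c g x))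
    (ℓ : Fin m)
    (hproper : Finset.univ.filter (fun i => 0 < g ℓ i) ≠ (Finset.univ : Finset (Fin (n ℓ)))) :
    (∑ i ∈ Finset.univ.filter (fun i => 0 < g ℓ i), π ℓ i) < 1
    ∧ (∀ i ∈ Finset.univ.filter (fun i => 0 < g ℓ i),
        (1 - ∑ i ∈ Finset.univ.filter (fun i => 0 < g ℓ i), p ℓ i)
            / (1 - ∑ i ∈ Finset.univ.filter (fun i => 0 < g ℓ i), π ℓ i)
          < p ℓ i / π ℓ i)
    ∧ (∀ j : Fin (n ℓ), j ∉ Finset.univ.filter (fun i => 0 < g ℓ i) →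
        p ℓ j / π ℓ j
          ≤ (1 - ∑ i ∈ Finset.univ.filter (fun i => 0 < g ℓ i), p ℓ i)
            / (1 - ∑ i ∈ Finset.univ.filter (fun i => 0 < g ℓ i), π ℓ i)) :=
  sandwich_characterization_general n p π hp hpsum hπ U U' hU c g hfeas hc hopt ℓ hproper
end
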